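/- For every integer t ≥ 0, let K₁(x,y,z) = x² + 4y² + (8·3^t + 1)z² + 4yz, K₂(x,y,z) = x² + y² + 32·3^t·z², and K₃(x,y,z) = 2x² + 2y² + (8·3^t + 1)z² + 2yz + 2zx. Then K₁, K₂, K₃ lie in the same genus, and for every positive integer n, 2·r(n², K₁) = r(n², K₂) + r(n², K₃). -/

import Mathlib

open Matrix

noncomputable section

/-- A ternary quadratic form `a·x² + b·y² + c·z² + d·yz + e·zx + g·xy`
with integer coefficients. -/
structure TernaryQF where
  a : ℤ
  b : ℤ
  c : ℤ
  d : ℤ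
  e : ℤ
  g : ℤ
deriving DecidableEq

namespace TernaryQF

/-- Evaluation of the form in any commutative ring. -/
def evalR {R : Type*} [CommRing R] (f : TernaryQF) (x y z : R) : R :=
  (f.a : R) * x ^ 2 + (f.b : R) * y ^ 2 + (f.c : R) * z ^ 2 +
    (f.d : R) * (y * z) + (f.e : R) * (z * x) + (f.g : R) * (x * y)

def eval (f : TernaryQF) (x y z : ℤ) : ℤ := f.evalR x y z

def evalVec (f : TernaryQF) (v : Fin 3 → ℤ) : ℤ := f.eval (v 0) (v 1) (v 2)

/-- Non-classic integral: the coefficients are coprime. -/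
def NonClassic (f : TernaryQF) : Prop :=
  Nat.gcd f.a.natAbs (Nat.gcd f.b.natAbs (Nat.gcd f.c.natAbs
    (Nat.gcd f.d.natAbs (Nat.gcd f.e.natAbs f.g.natAbs)))) = 1

/-- Positive definiteness (equivalent, for a rational symmetric matrix, to
positivity of the Gram matrix). -/
def PosDefn (f : TernaryQF) : Prop :=
  ∀ x y z : ℤ, ¬(x = 0 ∧ y = 0 ∧ z = 0) → 0 < f.eval x y z

/-- `r n f`: the number of representations of `n` by `f`. -/
def r (f : TernaryQF) (n : ℤ) : ℕ :=
  Set.ncard {v : Fin 3 → ℤ | f.evalVec v = n}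

/-- `4·df`, four times the discriminant (determinant of the Gram matrix), an integer. -/
def disc4 (f : TernaryQF) : ℤ :=
  4 * f.a * f.b * f.c + f.g * f.d * f.e - f.a * f.d ^ 2 - f.b * f.e ^ 2 - f.c * f.g ^ 2

/-- `h_p(df, λ) = (p^{λ+1}-1)/(p-1) - (−4df/p)·(p^{λ}-1)/(p-1)`, written via geometric sums. -/
def hFactor (f : TernaryQF) (p lam : ℕ) : ℤ :=
  (∑ i ∈ Finset.range (lam + 1), (p : ℤ) ^ i) -
    jacobiSym (-f.disc4) p * ∑ i ∈ Finset.range lam, (p : ℤ) ^ i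

/-- A (positive definite non-classic integral) ternary form is strongly s-regular if it
represents a nonzero square and the representation numbers of squares satisfy the
multiplicative formula of Cooper–Lam type. -/
def StronglySRegular (f : TernaryQF) : Prop :=
  (∃ n : ℕ, 0 < n ∧ f.r ((n : ℤ) ^ 2) ≠ 0) ∧
    ∀ n₁ n₂ : ℕ, 0 < n₁ → 0 < n₂ →
      (∀ p : ℕ, p.Prime → p ∣ n₁ → p = 2 ∨ (p : ℤ) ∣ f.disc4) →
      Odd n₂ → IsCoprime (n₂ : ℤ) f.disc4 →
      (f.r ((n₁ : ℤ) ^ 2 * (n₂ : ℤ) ^ 2) : ℤ) =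
        (f.r ((n₁ : ℤ) ^ 2) : ℤ) *
          ∏ p ∈ n₂.primeFactors, f.hFactor p (n₂.factorization p)

/-- `m_s(f)`: the minimal positive integer whose square is represented by `f`. -/
def msf (f : TernaryQF) : ℕ := sInf {n : ℕ | 0 < n ∧ f.r ((n : ℤ) ^ 2) ≠ 0}

/-- The (rational) Gram matrix of the form. -/
def gram (f : TernaryQF) : Matrix (Fin 3) (Fin 3) ℚ :=
  !![(f.a : ℚ), (f.g : ℚ) / 2, (f.e : ℚ) / 2;
     (f.g : ℚ) / 2, (f.b : ℚ), (f.d : ℚ) / 2;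
     (f.e : ℚ) / 2, (f.d : ℚ) / 2, (f.c : ℚ)]

/-- Equivalence of ternary forms over ℤ. -/
def TEquiv (f g : TernaryQF) : Prop :=
  ∃ U : Matrix (Fin 3) (Fin 3) ℤ, IsUnit U.det ∧
    (U.map ((↑) : ℤ → ℚ)).transpose * f.gram * U.map ((↑) : ℤ → ℚ) = g.gram

/-- The Gram matrix viewed over `ℚ_p`. -/
def gramPadic (p : ℕ) [Fact p.Prime] (f : TernaryQF) : Matrix (Fin 3) (Fin 3) ℚ_[p] :=
  f.gram.map (fun x : ℚ => (x : ℚ_[p]))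

/-- The coercion `ℤ_p → ℚ_p`. -/
def coeQp {p : ℕ} [Fact p.Prime] (x : ℤ_[p]) : ℚ_[p] := x

/-- Two matrices over `ℚ_p` are equivalent over `ℤ_p` if `Uᵀ A U = B` for some
`U ∈ GL₃(ℤ_p)`. -/
def EquivZp (p : ℕ) [Fact p.Prime] (A B : Matrix (Fin 3) (Fin 3) ℚ_[p]) : Prop :=
  ∃ U : Matrix (Fin 3) (Fin 3) ℤ_[p], IsUnit U.det ∧
    (U.map coeQp).transpose * A * U.map coeQp = B

/-- Two forms lie in the same genus: locally equivalent at every (finite) prime. -/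
def SameGenus (f g : TernaryQF) : Prop :=
  ∀ (p : ℕ) [Fact p.Prime], EquivZp p (gramPadic p f) (gramPadic p g)

/-- `Λ_p(f) = {v ∈ ℤ³ : f(v+z) ≡ f(z) (mod p) for all z ∈ ℤ³}`. -/
def Lam (p : ℕ) (f : TernaryQF) : Set (Fin 3 → ℤ) :=
  {v | ∀ z : Fin 3 → ℤ, (p : ℤ) ∣ (f.evalVec (v + z) - f.evalVec z)}

/-- `g` is a Watson `λ_p`-transform of `f`: `g` is obtained by expressing `f` on a basis
of `Λ_p(f)` and dividing by the largest power of `p` dividing all values. -/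
def IsWatson (p : ℕ) (f g : TernaryQF) : Prop :=
  ∃ (B : Matrix (Fin 3) (Fin 3) ℤ) (k : ℕ),
    Set.range B.mulVec = Lam p f ∧
    (∀ v : Fin 3 → ℤ, f.evalVec (B.mulVec v) = (p : ℤ) ^ k * g.evalVec v) ∧
    ¬ ∀ v : Fin 3 → ℤ, (p : ℤ) ∣ g.evalVec v

/-- The order of the (finite, for positive definite forms) integral isometry group. -/
def autCount (f : TernaryQF) : ℕ :=
  Set.ncard {U : Matrix (Fin 3) (Fin 3) ℤ | IsUnit U.det ∧
    (U.map ((↑) : ℤ → ℚ)).transpose * f.gram * U.map ((↑) : ℤ → ℚ) = f.gram}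

end TernaryQF

open TernaryQF

/-!
With `m = 8·3ᵗ` and `D = x² + y² + m z²` one has `K₁ = D(x, 2y + z, z)`, `K₂ = D(x, y, 2z)` and
`K₃ = D(x + y + z, x - y, z)`, so the representations of `N` by `K₁`, `K₂`, `K₃` are the
solutions of `D(X, Y, Z) = N` with `Y ≡ Z`, `Z ≡ 0`, `X + Y + Z ≡ 0 (mod 2)` respectively, and
swapping `X` and `Y` shows that `X ≡ Z` holds as often as `Y ≡ Z`. As `4 ∣ m`,
`N ≡ X² + Y² (mod 4)`; for `N ≡ 0, 1` (e.g. a square) `X` and `Y` are both even or of different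
parity, and either way the pairs of conditions `{Y ≡ Z, X ≡ Z}` and `{Z ≡ 0, X + Y + Z ≡ 0}`
have the same union and the same intersection.

For the genus, an integral matrix `A` with `Aᵀ G₁ A = c² G` and `c`, `det A` prime to `p` yields
the `ℤ_p`-equivalence `c⁻¹ A`; one such matrix with `c = 1 + 2·3ᵗ` serves at `p = 2`, and one
with `c = 2` at every odd `p`.
-/

theorem Set.ncard_add_ncard_eq_of_iff {α : Type*} {Q P₁ P₂ R₁ R₂ : α → Prop}
    (hQ : {x | Q x}.Finite) (hor : ∀ x, Q x → (P₁ x ∨ P₂ x ↔ R₁ x ∨ R₂ x))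
    (hand : ∀ x, Q x → (P₁ x ∧ P₂ x ↔ R₁ x ∧ R₂ x)) :
    {x | Q x ∧ P₁ x}.ncard + {x | Q x ∧ P₂ x}.ncard =
      {x | Q x ∧ R₁ x}.ncard + {x | Q x ∧ R₂ x}.ncard := by
  have hfin : ∀ P : α → Prop, {x | Q x ∧ P x}.Finite := fun P => hQ.subset fun x hx => hx.1
  rw [← Set.ncard_union_add_ncard_inter _ _ (hfin _) (hfin _),
    ← Set.ncard_union_add_ncard_inter _ _ (hfin _) (hfin _)]
  congr 2 <;> ext x <;> simp only [Set.mem_union, Set.mem_inter_iff, Set.mem_ofPred_eq]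
  · have := hor x; tauto
  · have := hand x; tauto

namespace TernaryQF

@[simp]
lemma evalVec_mk (a b c d e g : ℤ) (v : Fin 3 → ℤ) :
    (mk a b c d e g).evalVec v =
      a * v 0 ^ 2 + b * v 1 ^ 2 + c * v 2 ^ 2 + d * (v 1 * v 2) + e * (v 2 * v 0) +
        g * (v 0 * v 1) := rfl

lemma sq_emod_four (x : ℤ) : x ^ 2 % 4 = x % 2 := by
  have h4 : x % 4 = 0 ∨ x % 4 = 1 ∨ x % 4 = 2 ∨ x % 4 = 3 := by omega
  rcases h4 with h | h | h | h <;> simp [pow_two, Int.mul_emod, h] <;> omega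

lemma r_eq_ncard_of_substitution {f g : TernaryQF} {L M : (Fin 3 → ℤ) → Fin 3 → ℤ}
    {P : (Fin 3 → ℤ) → Prop} (hfg : ∀ v, f.evalVec v = g.evalVec (L v))
    (hML : Function.LeftInverse M L) (hLP : ∀ v, P (L v)) (hLM : ∀ w, P w → L (M w) = w)
    (N : ℤ) : f.r N = {w | g.evalVec w = N ∧ P w}.ncard := by
  have himage : {w | g.evalVec w = N ∧ P w} = L '' {v | f.evalVec v = N} := by
    ext w
    constructor
    · rintro ⟨hw, hP⟩
      exact ⟨M w, by rw [Set.mem_ofPred_eq, hfg, hLM w hP, hw], hLM w hP⟩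
    · rintro ⟨v, hv, rfl⟩
      exact ⟨(hfg v).symm.trans hv, hLP v⟩
  rw [himage, Set.ncard_image_of_injective _ hML.injective, r]

section Counting

variable (m N : ℤ)

lemma r_K₁ : (mk 1 4 (m + 1) 4 0 0).r N =
    {w | (mk 1 1 m 0 0 0).evalVec w = N ∧ w 1 % 2 = w 2 % 2}.ncard :=
  r_eq_ncard_of_substitution (L := fun v => ![v 0, 2 * v 1 + v 2, v 2])
    (M := fun w => ![w 0, (w 1 - w 2) / 2, w 2]) (fun v => by simp; ring)
    (fun v => by ext i; fin_cases i <;> simp) (fun v => by simp)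
    (fun w hw => by ext i; fin_cases i <;> simp; omega) N

lemma r_K₁_swap : (mk 1 4 (m + 1) 4 0 0).r N =
    {w | (mk 1 1 m 0 0 0).evalVec w = N ∧ w 0 % 2 = w 2 % 2}.ncard :=
  r_eq_ncard_of_substitution (L := fun v => ![2 * v 1 + v 2, v 0, v 2])
    (M := fun w => ![w 1, (w 0 - w 2) / 2, w 2]) (fun v => by simp; ring)
    (fun v => by ext i; fin_cases i <;> simp) (fun v => by simp)
    (fun w hw => by ext i; fin_cases i <;> simp; omega) N

lemma r_K₂ : (mk 1 1 (4 * m) 0 0 0).r N =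
    {w | (mk 1 1 m 0 0 0).evalVec w = N ∧ w 2 % 2 = 0}.ncard :=
  r_eq_ncard_of_substitution (L := fun v => ![v 0, v 1, 2 * v 2])
    (M := fun w => ![w 0, w 1, w 2 / 2]) (fun v => by simp; ring)
    (fun v => by ext i; fin_cases i <;> simp) (fun v => by simp)
    (fun w hw => by ext i; fin_cases i <;> simp; omega) N

lemma r_K₃ : (mk 2 2 (m + 1) 2 2 0).r N =
    {w | (mk 1 1 m 0 0 0).evalVec w = N ∧ (w 0 + w 1 + w 2) % 2 = 0}.ncard :=
  r_eq_ncard_of_substitution (L := fun v => ![v 0 + v 1 + v 2, v 0 - v 1, v 2])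
    (M := fun w => ![(w 0 + w 1 - w 2) / 2, (w 0 - w 1 - w 2) / 2, w 2]) (fun v => by simp; ring)
    (fun v => by ext i; fin_cases i <;> simp <;> omega) (fun v => by simp; omega)
    (fun w hw => by ext i; fin_cases i <;> simp <;> omega) N

end Counting

lemma finite_setOf_evalVec_diag_eq {m : ℤ} (hm : 0 < m) (N : ℤ) :
    {w | (mk 1 1 m 0 0 0).evalVec w = N}.Finite := by
  refine (Set.finite_Icc (fun _ => -N) fun _ => N).subset fun w hw => ?_
  have hsq : ∀ i, w i ^ 2 ≤ N := by
    simp only [Set.mem_ofPred_eq, evalVec_mk] at hw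
    intro i
    fin_cases i <;> simp <;> nlinarith [sq_nonneg (w 0), sq_nonneg (w 1), sq_nonneg (w 2)]
  refine ⟨fun i => ?_, fun i => (Int.le_self_sq _).trans (hsq i)⟩
  have := Int.le_self_sq (-w i)
  rw [neg_sq] at this
  linarith [hsq i]

lemma emod_four_eq_of_evalVec_diag {m N : ℤ} (hm : 4 ∣ m) {w : Fin 3 → ℤ}
    (hw : (mk 1 1 m 0 0 0).evalVec w = N) : N % 4 = w 0 % 2 + w 1 % 2 := by
  obtain ⟨k, rfl⟩ := hm
  have hN : N = w 0 ^ 2 + w 1 ^ 2 + 4 * (k * w 2 ^ 2) := by rw [← hw, evalVec_mk]; ring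
  rw [hN, Int.add_mul_emod_self_left, Int.add_emod, sq_emod_four, sq_emod_four]
  omega

theorem two_mul_r_K₁_eq_r_K₂_add_r_K₃ {m : ℤ} (hm : 0 < m) (hm4 : 4 ∣ m) {N : ℤ}
    (hN : N % 4 = 0 ∨ N % 4 = 1) :
    2 * (mk 1 4 (m + 1) 4 0 0).r N = (mk 1 1 (4 * m) 0 0 0).r N + (mk 2 2 (m + 1) 2 2 0).r N := by
  rw [two_mul]
  nth_rewrite 1 [r_K₁]
  rw [r_K₁_swap, r_K₂, r_K₃]
  refine Set.ncard_add_ncard_eq_of_iff (finite_setOf_evalVec_diag_eq hm N)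
    (fun w hw => ?_) (fun w hw => ?_) <;>
    have := emod_four_eq_of_evalVec_diag hm4 hw <;> constructor <;> intro h <;> omega

lemma equivZp_of_int_congr {p : ℕ} [Fact p.Prime] {f g : TernaryQF}
    (A : Matrix (Fin 3) (Fin 3) ℤ) (c : ℤ) (hc : IsCoprime c p) (hA : IsCoprime A.det p)
    (h : (A.map ((↑) : ℤ → ℚ))ᵀ * f.gram * A.map ((↑) : ℤ → ℚ) = (c ^ 2 : ℚ) • g.gram) :
    EquivZp p (gramPadic p f) (gramPadic p g) := by
  obtain ⟨u, hu⟩ := PadicInt.isUnit_iff.2 (PadicInt.norm_intCast_eq_one_iff.2 hc)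
  refine ⟨(↑u⁻¹ : ℤ_[p]) • A.map (↑), ?_, ?_⟩
  · have hdet : (A.map ((↑) : ℤ → ℤ_[p])).det = A.det := (Int.cast_det A).symm
    rw [det_smul, hdet]
    exact (u⁻¹.isUnit.pow _).mul (PadicInt.isUnit_iff.2 (PadicInt.norm_intCast_eq_one_iff.2 hA))
  · set P : Matrix (Fin 3) (Fin 3) ℚ_[p] := A.map (↑)
    have hU : ((↑u⁻¹ : ℤ_[p]) • A.map (↑)).map coeQp = coeQp (↑u⁻¹ : ℤ_[p]) • P := by
      ext i j; simp [P, coeQp]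
    have hP : Pᵀ * gramPadic p f * P = (c : ℚ_[p]) ^ 2 • gramPadic p g := by
      have := congrArg (Rat.castHom ℚ_[p]).mapMatrix h
      simp only [map_mul, RingHom.mapMatrix_apply] at this
      rw [Matrix.map_smul' _ _ _ (map_mul _)] at this
      simpa [Matrix.transpose_map, Matrix.map_map, Function.comp_def, gramPadic, P] using this
    have hinv : coeQp (↑u⁻¹ : ℤ_[p]) * c = 1 := by
      rw [show (c : ℚ_[p]) = coeQp (u : ℤ_[p]) by simp [coeQp, hu], coeQp, coeQp,
        ← PadicInt.coe_mul, u.inv_mul, PadicInt.coe_one]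
    rw [hU, transpose_smul, smul_mul, smul_mul_smul_comm, hP, smul_smul, ← sq, ← mul_pow, hinv,
      one_pow, one_smul]

lemma isCoprime_two_of_ne_two {p : ℕ} (hp : p.Prime) (h2 : p ≠ 2) : IsCoprime (2 : ℤ) p := by
  exact_mod_cast Nat.isCoprime_iff_coprime.2 ((Nat.coprime_primes Nat.prime_two hp).2 h2.symm)

theorem sameGenus_K₁_K₂ (s : ℤ) :
    SameGenus (mk 1 4 (8 * s + 1) 4 0 0) (mk 1 1 (32 * s) 0 0 0) := by
  intro p hp
  rcases eq_or_ne p 2 with rfl | hp2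
  · have hc : IsCoprime (1 + 2 * s) (2 : ℕ) := ⟨1, -s, by push_cast; ring⟩
    have hdet : (!![1 + 2 * s, 0, 0; 0, -s, -(6 * s + 1); 0, 1, 2 - 4 * s]).det =
        (1 + 2 * s) ^ 3 := by
      simp [det_fin_three]; ring
    refine equivZp_of_int_congr _ _ hc (hdet ▸ hc.pow_left) ?_
    ext i j
    fin_cases i <;> fin_cases j <;> simp [TernaryQF.gram, mul_apply, Fin.sum_univ_three] <;> ring
  · have hc := isCoprime_two_of_ne_two hp.out hp2
    have hdet : (!![2, 0, 0; 0, 1, -2; 0, 0, 4] : Matrix (Fin 3) (Fin 3) ℤ).det = 2 ^ 3 := by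
      simp [det_fin_three]
    refine equivZp_of_int_congr _ _ hc (hdet ▸ hc.pow_left) ?_
    ext i j
    fin_cases i <;> fin_cases j <;> simp [TernaryQF.gram, mul_apply, Fin.sum_univ_three] <;> ring

theorem sameGenus_K₁_K₃ (s : ℤ) :
    SameGenus (mk 1 4 (8 * s + 1) 4 0 0) (mk 2 2 (8 * s + 1) 2 2 0) := by
  intro p hp
  rcases eq_or_ne p 2 with rfl | hp2
  · have hc : IsCoprime (1 + 2 * s) (2 : ℕ) := ⟨1, -s, by push_cast; ring⟩
    have hdet : (!![1 - 2 * s, 2 * s - 1, -(8 * s); s, s + 1, 2 * s; 1, -1, 1 - 2 * s]).det =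
        (1 + 2 * s) ^ 3 := by
      simp [det_fin_three]; ring
    refine equivZp_of_int_congr _ _ hc (hdet ▸ hc.pow_left) ?_
    ext i j
    fin_cases i <;> fin_cases j <;> simp [TernaryQF.gram, mul_apply, Fin.sum_univ_three] <;> ring
  · have hc := isCoprime_two_of_ne_two hp.out hp2
    have hdet : (!![2, 2, 2; 1, -1, -1; 0, 0, 2] : Matrix (Fin 3) (Fin 3) ℤ).det = -2 ^ 3 := by
      simp [det_fin_three]
    refine equivZp_of_int_congr _ _ hc (hdet ▸ hc.pow_left.neg_left) ?_
    ext i j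
    fin_cases i <;> fin_cases j <;> simp [TernaryQF.gram, mul_apply, Fin.sum_univ_three] <;> ring

end TernaryQF

/-- `K₁ = x²+4y²+(8·3ᵗ+1)z²+4yz`, `K₂ = x²+y²+32·3ᵗz²`,
`K₃ = 2x²+2y²+(8·3ᵗ+1)z²+2yz+2zx` lie in one genus and `2r(n²,K₁) = r(n²,K₂)+r(n²,K₃)`. -/
theorem stmt15 (t : ℕ) :
    SameGenus (TernaryQF.mk 1 4 (8 * 3 ^ t + 1) 4 0 0) (TernaryQF.mk 1 1 (32 * 3 ^ t) 0 0 0) ∧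
    SameGenus (TernaryQF.mk 1 4 (8 * 3 ^ t + 1) 4 0 0)
      (TernaryQF.mk 2 2 (8 * 3 ^ t + 1) 2 2 0) ∧
    ∀ n : ℕ, 0 < n →
      2 * (TernaryQF.mk 1 4 (8 * 3 ^ t + 1) 4 0 0).r ((n : ℤ) ^ 2) =
        (TernaryQF.mk 1 1 (32 * 3 ^ t) 0 0 0).r ((n : ℤ) ^ 2) +
          (TernaryQF.mk 2 2 (8 * 3 ^ t + 1) 2 2 0).r ((n : ℤ) ^ 2) := by
  refine ⟨sameGenus_K₁_K₂ _, sameGenus_K₁_K₃ _, fun n _ => ?_⟩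
  have hsq : (n : ℤ) ^ 2 % 4 = 0 ∨ (n : ℤ) ^ 2 % 4 = 1 := by rw [sq_emod_four]; omega
  have h := two_mul_r_K₁_eq_r_K₂_add_r_K₃ (m := 8 * 3 ^ t) (by positivity)
    ⟨2 * 3 ^ t, by ring⟩ hsq
  rwa [show (4 * (8 * 3 ^ t) : ℤ) = 32 * 3 ^ t by ring] at h
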